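/- The ideal N ⊆ P̄ (the largest ord-graded Σ-ideal contained in ker φ) is generated by the elements: (i) t(σ) − t(τ) for all σ, τ ∈ Σ with σ ≠ τ and deg(σ) = deg(τ); and (ii) t(σ)t(τ) − t(σ) and x(σ)t(τ) − x(σ) for all x ∈ X and all σ, τ ∈ Σ with deg(σ) ≥ deg(τ). -/

import Mathlib

/- Common setup: the monoid Σ = ⟨σ₁,…,σ_r⟩ ≅ (ℕ^r,+) is modelled additively as
`Fin r → ℕ`; the algebra of partial difference polynomials `P = K[X(Σ)]` is the
polynomial ring `MvPolynomial (X × (Fin r → ℕ)) K`, and its monomials are elements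
of `(X × (Fin r → ℕ)) →₀ ℕ`. -/

noncomputable section

/-- The total degree `deg : Σ → ℕ` of an element of the monoid `Σ ≅ ℕ^r`. -/
def degS {r : ℕ} (σ : Fin r → ℕ) : ℕ := ∑ i, σ i

/-- The shift action of `σ ∈ Σ` on monomials: `σ · ∏ xᵢ(τᵢ)^{aᵢ} = ∏ xᵢ(στᵢ)^{aᵢ}`. -/
def shiftMon {V : Type*} {r : ℕ} (σ : Fin r → ℕ) (m : (V × (Fin r → ℕ)) →₀ ℕ) :
    (V × (Fin r → ℕ)) →₀ ℕ :=
  Finsupp.mapDomain (fun p => (p.1, σ + p.2)) m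

/-- The shift action of `σ ∈ Σ` on `P` by `K`-algebra endomorphisms,
determined by `σ · x(τ) = x(στ)`. -/
def shiftPoly (K : Type*) [CommSemiring K] {V : Type*} {r : ℕ} (σ : Fin r → ℕ) :
    MvPolynomial (V × (Fin r → ℕ)) K →ₐ[K] MvPolynomial (V × (Fin r → ℕ)) K :=
  MvPolynomial.rename (fun p => (p.1, σ + p.2))

/-- The orbit set `Σ · G` of a set of polynomials `G`. -/
def shiftSet (K : Type*) [CommSemiring K] {V : Type*} {r : ℕ}
    (G : Set (MvPolynomial (V × (Fin r → ℕ)) K)) :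
    Set (MvPolynomial (V × (Fin r → ℕ)) K) :=
  {p | ∃ (σ : Fin r → ℕ) (g : MvPolynomial (V × (Fin r → ℕ)) K), g ∈ G ∧ p = shiftPoly K σ g}

/-- The least common multiple of two monomials (pointwise maximum of exponents). -/
def lcmMon {V : Type*} {r : ℕ} (m n : (V × (Fin r → ℕ)) →₀ ℕ) : (V × (Fin r → ℕ)) →₀ ℕ :=
  Finsupp.zipWith max (max_self 0) m n

/-- The greatest common divisor of two monomials (pointwise minimum of exponents). -/
def gcdMon {V : Type*} {r : ℕ} (m n : (V × (Fin r → ℕ)) →₀ ℕ) : (V × (Fin r → ℕ)) →₀ ℕ :=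
  Finsupp.zipWith min (min_self 0) m n

/-- The strict relation of a linear order given as a term. -/
def oLT {α : Type*} (lo : LinearOrder α) (a b : α) : Prop := lo.lt a b

/-- The non-strict relation of a linear order given as a term. -/
def oLE {α : Type*} (lo : LinearOrder α) (a b : α) : Prop := lo.le a b

/-- `lo` is a *monomial ordering* of an additive (monomial) monoid: a linear order
which is a well-order, has the monomial `1` (written additively: `0`) as least
element, and is compatible with multiplication (written additively). -/
structure IsMonOrd {α : Type*} [AddCommMonoid α] (lo : LinearOrder α) : Prop where
  wf : WellFounded (oLT lo)
  zero_le : ∀ a : α, oLE lo 0 a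
  add_lt : ∀ a b c : α, oLT lo a b → oLT lo (c + a) (c + b)

/-- The leading monomial of a polynomial with respect to a monomial ordering
(junk value `1`, i.e. `0`, on the zero polynomial). -/
def lmo {K V : Type*} [CommSemiring K] {r : ℕ} (lo : LinearOrder ((V × (Fin r → ℕ)) →₀ ℕ))
    (f : MvPolynomial (V × (Fin r → ℕ)) K) : (V × (Fin r → ℕ)) →₀ ℕ :=
  haveI : Decidable (f = 0) := Classical.dec _
  if h : f = 0 then 0
  else @Finset.max' _ lo f.support
    (Finset.nonempty_iff_ne_empty.2 fun he => h (MvPolynomial.support_eq_empty.mp he))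

/-- The leading coefficient of a polynomial. -/
def lco {K V : Type*} [CommSemiring K] {r : ℕ} (lo : LinearOrder ((V × (Fin r → ℕ)) →₀ ℕ))
    (f : MvPolynomial (V × (Fin r → ℕ)) K) : K :=
  MvPolynomial.coeff (lmo lo f) f

/-- The S-polynomial `spoly(f,g) = (l/lt(f))·f − (l/lt(g))·g`, where
`l = lcm(lm f, lm g)`. -/
def spoly {K V : Type*} [Field K] {r : ℕ} (lo : LinearOrder ((V × (Fin r → ℕ)) →₀ ℕ))
    (f g : MvPolynomial (V × (Fin r → ℕ)) K) : MvPolynomial (V × (Fin r → ℕ)) K :=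
  MvPolynomial.monomial (lcmMon (lmo lo f) (lmo lo g) - lmo lo f) (lco lo f)⁻¹ * f -
  MvPolynomial.monomial (lcmMon (lmo lo f) (lmo lo g) - lmo lo g) (lco lo g)⁻¹ * g

/-- `f` has a Gröbner representation `f = ∑ qᵢ gᵢ` with respect to `G`:
`gᵢ ∈ G` and `lm(f) ⪰ lm(qᵢ)·lm(gᵢ)` for all (nontrivial) `i`. -/
def HasGroebnerRep {K V : Type*} [Field K] {r : ℕ}
    (lo : LinearOrder ((V × (Fin r → ℕ)) →₀ ℕ))
    (G : Set (MvPolynomial (V × (Fin r → ℕ)) K))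
    (f : MvPolynomial (V × (Fin r → ℕ)) K) : Prop :=
  ∃ (n : ℕ) (q g : Fin n → MvPolynomial (V × (Fin r → ℕ)) K),
    (∀ i, g i ∈ G) ∧ f = ∑ i, q i * g i ∧
    ∀ i, q i ≠ 0 → g i ≠ 0 → oLE lo (lmo lo (q i) + lmo lo (g i)) (lmo lo f)

/-- The ideal `LM(S)` generated by the leading monomials of the nonzero elements
of `S`. -/
def lmIdeal {K V : Type*} [Field K] {r : ℕ} (lo : LinearOrder ((V × (Fin r → ℕ)) →₀ ℕ))
    (S : Set (MvPolynomial (V × (Fin r → ℕ)) K)) : Ideal (MvPolynomial (V × (Fin r → ℕ)) K) :=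
  Ideal.span ((fun g => (MvPolynomial.monomial (lmo lo g) (1 : K))) '' {g | g ∈ S ∧ g ≠ 0})

/-- `G ⊆ I` is a Gröbner basis of `I`: `LM(I)` is generated by `lm(G)`. -/
def IsGBasis {K V : Type*} [Field K] {r : ℕ} (lo : LinearOrder ((V × (Fin r → ℕ)) →₀ ℕ))
    (G : Set (MvPolynomial (V × (Fin r → ℕ)) K))
    (I : Ideal (MvPolynomial (V × (Fin r → ℕ)) K)) : Prop :=
  G ⊆ ↑I ∧ lmIdeal lo (I : Set (MvPolynomial (V × (Fin r → ℕ)) K)) = lmIdeal lo G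

/-- `G ⊆ I` is a Gröbner Σ-basis of `I`: `LM(I)` is generated by `Σ·lm(G)`. -/
def IsSigmaGBasis {K V : Type*} [Field K] {r : ℕ} (lo : LinearOrder ((V × (Fin r → ℕ)) →₀ ℕ))
    (G : Set (MvPolynomial (V × (Fin r → ℕ)) K))
    (I : Ideal (MvPolynomial (V × (Fin r → ℕ)) K)) : Prop :=
  G ⊆ ↑I ∧
  lmIdeal lo (I : Set (MvPolynomial (V × (Fin r → ℕ)) K)) =
    Ideal.span {p | ∃ (σ : Fin r → ℕ) (g : MvPolynomial (V × (Fin r → ℕ)) K),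
      g ∈ G ∧ g ≠ 0 ∧ p = MvPolynomial.monomial (shiftMon σ (lmo lo g)) (1 : K)}

/-- `I` is a Σ-ideal: it is invariant under all the shift endomorphisms. -/
def IsSigmaIdeal {K V : Type*} [CommSemiring K] {r : ℕ}
    (I : Ideal (MvPolynomial (V × (Fin r → ℕ)) K)) : Prop :=
  ∀ (σ : Fin r → ℕ) (p : MvPolynomial (V × (Fin r → ℕ)) K), p ∈ I → shiftPoly K σ p ∈ I

/-- The weight function `w : M → Σ̂ = Σ ∪ {0}` (here `Σ̂` is `WithBot (Fin r → ℕ)`,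
with `⊥` the extra element "0"):  `w(m)` is the `<`-maximum of the weights of the
variables occurring in `m`, where `<` is the given monomial ordering `loS` of `Σ`. -/
def wfun {V : Type*} {r : ℕ} (loS : LinearOrder (Fin r → ℕ))
    (m : (V × (Fin r → ℕ)) →₀ ℕ) : WithBot (Fin r → ℕ) :=
  @Finset.max _ loS (m.support.image (fun p => p.2))

/-- Addition in the idempotent semiring `Σ̂`: the maximum with respect to the
monomial ordering `loS` of `Σ`, with `⊥` as neutral element. -/
def hatAdd {r : ℕ} (loS : LinearOrder (Fin r → ℕ)) (a b : WithBot (Fin r → ℕ)) :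
    WithBot (Fin r → ℕ) :=
  @Max.max _ (@WithBot.linearOrder _ loS).toMax a b

/-- The order `≤` on `Σ̂` induced by the monomial ordering `loS` of `Σ`. -/
def hatLe {r : ℕ} (loS : LinearOrder (Fin r → ℕ)) (a b : WithBot (Fin r → ℕ)) : Prop :=
  @LE.le _ (@WithBot.linearOrder _ loS).toLE a b

/-- The strict order `<` on `Σ̂` induced by the monomial ordering `loS` of `Σ`. -/
def hatLt {r : ℕ} (loS : LinearOrder (Fin r → ℕ)) (a b : WithBot (Fin r → ℕ)) : Prop :=
  @LT.lt _ (@WithBot.linearOrder _ loS).toLT a b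

/-- The order function `ord : M → ℕ ∪ {−∞}`:  the maximum of `deg σ` over the
variables `x(σ)` occurring in `m` (and `−∞ = ⊥` for `m = 1`). -/
def ordFun {V : Type*} {r : ℕ} (m : (V × (Fin r → ℕ)) →₀ ℕ) : WithBot ℕ :=
  (m.support.image (fun p => degS p.2)).max

/-- A polynomial is `w`-homogeneous if all its monomials have the same weight. -/
def IsWHomog {K V : Type*} [CommSemiring K] {r : ℕ} (loS : LinearOrder (Fin r → ℕ))
    (f : MvPolynomial (V × (Fin r → ℕ)) K) : Prop :=
  ∀ m ∈ f.support, ∀ n ∈ f.support, wfun loS m = wfun loS n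

/-- A polynomial is `ord`-homogeneous if all its monomials have the same order. -/
def IsOrdHomog {K V : Type*} [CommSemiring K] {r : ℕ}
    (f : MvPolynomial (V × (Fin r → ℕ)) K) : Prop :=
  ∀ m ∈ f.support, ∀ n ∈ f.support, ordFun m = ordFun n

/-- The block `m(δ) ∈ M(δ) ≅ Mon(K[X])` of a monomial `m`, collecting the variables
of weight exactly `δ`. -/
def blockAt {X : Type*} {r : ℕ} (δ : Fin r → ℕ) (m : (X × (Fin r → ℕ)) →₀ ℕ) : X →₀ ℕ :=
  Finsupp.comapDomain (fun x => (x, δ)) m (fun _ _ _ _ h => congrArg Prod.fst h)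

/-- The weight Σ-ordering `≺_w` determined by a monomial ordering `ltS` of `Σ` and a
monomial ordering `lt1` of `P(1) = K[X(1)]` (transported to every block `P(δ)` via the
isomorphism `ρ(δ)`): compare the blocks of highest weight where the monomials differ. -/
def wlt {X : Type*} {r : ℕ} (ltS : (Fin r → ℕ) → (Fin r → ℕ) → Prop)
    (lt1 : (X →₀ ℕ) → (X →₀ ℕ) → Prop)
    (m n : (X × (Fin r → ℕ)) →₀ ℕ) : Prop :=
  ∃ δ : Fin r → ℕ, lt1 (blockAt δ m) (blockAt δ n) ∧
    ∀ ε : Fin r → ℕ, ltS δ ε → blockAt ε m = blockAt ε n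

/-- The block `m(x_j) ∈ M(x_j) ≅ Mon(K[x₀(Σ)])` of a monomial `m` (here `X = ℕ`),
collecting the variables of index exactly `j`. -/
def blockIdx {r : ℕ} (j : ℕ) (m : (ℕ × (Fin r → ℕ)) →₀ ℕ) : (Fin r → ℕ) →₀ ℕ :=
  Finsupp.comapDomain (fun σ => (j, σ)) m (fun _ _ _ _ h => congrArg Prod.snd h)

/-- The shift action of `σ ∈ Σ` on the monomials of `P(x₀) = K[x₀(Σ)]`. -/
def shiftMon0 {r : ℕ} (σ : Fin r → ℕ) (m : (Fin r → ℕ) →₀ ℕ) : (Fin r → ℕ) →₀ ℕ :=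
  Finsupp.mapDomain (fun τ => σ + τ) m

/-- The index Σ-ordering `≺_i` determined by a monomial Σ-ordering `lt0` of
`P(x₀) = K[x₀(Σ)]` (transported to every `P(x_j)` by the index shift): compare the
blocks of highest index where the monomials differ. -/
def ilt {r : ℕ} (lt0 : ((Fin r → ℕ) →₀ ℕ) → ((Fin r → ℕ) →₀ ℕ) → Prop)
    (m n : (ℕ × (Fin r → ℕ)) →₀ ℕ) : Prop :=
  ∃ j : ℕ, lt0 (blockIdx j m) (blockIdx j n) ∧ ∀ k : ℕ, j < k → blockIdx k m = blockIdx k n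

/- Homogenization setup:  `X̄ = X ∪ {t}` is modelled as `Option X`, with `none`
playing the role of the homogenizing variable `t` and `some x` that of `x ∈ X`;
thus `P̄ = K[X̄(Σ)] = MvPolynomial (Option X × (Fin r → ℕ)) K ⊇ P`. -/

/-- The inclusion `P = K[X(Σ)] ⊆ P̄ = K[X̄(Σ)]`. -/
def embP (K : Type*) [CommSemiring K] {X : Type*} {r : ℕ} :
    MvPolynomial (X × (Fin r → ℕ)) K →ₐ[K] MvPolynomial (Option X × (Fin r → ℕ)) K :=
  MvPolynomial.rename (fun p => (some p.1, p.2))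

/-- The inclusion `Mon(P) ⊆ Mon(P̄)` on monomials. -/
def embMon {X : Type*} {r : ℕ} (m : (X × (Fin r → ℕ)) →₀ ℕ) :
    (Option X × (Fin r → ℕ)) →₀ ℕ :=
  Finsupp.mapDomain (fun p => (some p.1, p.2)) m

/-- The dehomogenization Σ-endomorphism `φ : P̄ → P̄` with `x(σ) ↦ x(σ)`,
`t(σ) ↦ 1`. -/
def phiBar (K : Type*) [CommSemiring K] {X : Type*} {r : ℕ} :
    MvPolynomial (Option X × (Fin r → ℕ)) K →ₐ[K]
      MvPolynomial (Option X × (Fin r → ℕ)) K :=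
  MvPolynomial.aeval (fun p => p.1.elim 1 (fun x => MvPolynomial.X (some x, p.2)))

/-- The dehomogenization map `P̄ → P` with `x(σ) ↦ x(σ)`, `t(σ) ↦ 1`. -/
def dehom (K : Type*) [CommSemiring K] {X : Type*} {r : ℕ} :
    MvPolynomial (Option X × (Fin r → ℕ)) K →ₐ[K] MvPolynomial (X × (Fin r → ℕ)) K :=
  MvPolynomial.aeval (fun p => p.1.elim 1 (fun x => MvPolynomial.X (x, p.2)))

/-- `N`, the largest `ord`-graded Σ-ideal of `P̄` contained in `ker φ`: the ideal
generated by all `ord`-homogeneous elements of `ker φ`. -/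
def Nideal (K : Type*) [CommSemiring K] (X : Type*) (r : ℕ) :
    Ideal (MvPolynomial (Option X × (Fin r → ℕ)) K) :=
  Ideal.span {f | IsOrdHomog f ∧ phiBar K f = 0}

/-- The top order of a polynomial: the maximum of the orders of its monomials. -/
def topord {K V : Type*} [CommSemiring K] {r : ℕ}
    (f : MvPolynomial (V × (Fin r → ℕ)) K) : WithBot ℕ :=
  f.support.sup (fun m => ordFun m)

/-- The `ord`-homogenization `I*` of an ideal `I ⊆ P`: the ideal of `P̄` generated by
all `ord`-homogeneous elements of `φ⁻¹(I)`. -/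
def Istar {K : Type*} [Field K] {X : Type*} {r : ℕ}
    (I : Ideal (MvPolynomial (X × (Fin r → ℕ)) K)) :
    Ideal (MvPolynomial (Option X × (Fin r → ℕ)) K) :=
  Ideal.span {f | IsOrdHomog f ∧ dehom K f ∈ I}

/-- A monomial of `P̄` is `t`-free when it lies in `M = Mon(P)`. -/
def TFree {X : Type*} {r : ℕ} (m : (Option X × (Fin r → ℕ)) →₀ ℕ) : Prop :=
  ∀ p ∈ m.support, p.1 ≠ (none : Option X)

/-- A monomial of `P̄` is normal modulo `N` if it is of the form `m ∈ M`, or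
`t(σ)·n` with `n ∈ M`, `deg σ > ord n` and `t(σ)` the `≺`-least variable `t(τ)`
with `deg τ = deg σ`. -/
def NormalMon {X : Type*} {r : ℕ} (lo : LinearOrder ((Option X × (Fin r → ℕ)) →₀ ℕ))
    (m : (Option X × (Fin r → ℕ)) →₀ ℕ) : Prop :=
  TFree m ∨ ∃ (σ : Fin r → ℕ) (n : (Option X × (Fin r → ℕ)) →₀ ℕ),
    TFree n ∧ ordFun n < (degS σ : WithBot ℕ) ∧
    m = Finsupp.single ((none : Option X), σ) 1 + n ∧
    ∀ τ : Fin r → ℕ, degS τ = degS σ →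
      oLE lo (Finsupp.single ((none : Option X), σ) 1)
        (Finsupp.single ((none : Option X), τ) 1)

/-- `lo` is an `ord`-homogenization Σ-ordering of `P̄`: it is compatible with the
order function, and `t(σ)·m ≺ n` whenever `m, n ∈ M` and `deg σ = ord n > ord m`. -/
def IsHomogOrd {X : Type*} {r : ℕ}
    (lo : LinearOrder ((Option X × (Fin r → ℕ)) →₀ ℕ)) : Prop :=
  (∀ m n : (Option X × (Fin r → ℕ)) →₀ ℕ, ordFun m < ordFun n → oLT lo m n) ∧
  ∀ (m n : (Option X × (Fin r → ℕ)) →₀ ℕ) (σ : Fin r → ℕ),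
    TFree m → TFree n → (degS σ : WithBot ℕ) = ordFun n → ordFun m < ordFun n →
    oLT lo (Finsupp.single ((none : Option X), σ) 1 + m) n

end

/-! Modulo the relations (i)–(ii), a monomial `n · s` with `n` free of `t` and `s` a product
of `t(τ)`'s absorbs every factor `t(τ)` with `deg τ` at most its order, and `t(σ)` may be
exchanged for any `t(τ)` of the same degree. Hence the class of `n · s` depends only on `n`
and `ord (n · s)`. An `ord`-homogeneous `f ∈ ker φ` has all its monomials of one order, and
the coefficients of those with a given `t`-free part `n` add up to the coefficient of `n` in
`φ f = 0`; so `f` vanishes modulo the relations. -/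

open MvPolynomial

namespace Finset

theorem sum_smul_eq_zero_of_sum_fiberwise_eq_zero {α β R M : Type*} [DecidableEq β]
    [Semiring R] [AddCommMonoid M] [Module R M] {s : Finset α} {c : α → R} {v : α → M}
    {g : α → β} (hv : ∀ a ∈ s, ∀ b ∈ s, g a = g b → v a = v b)
    (hc : ∀ b, ∑ a ∈ s with g a = b, c a = 0) : ∑ a ∈ s, c a • v a = 0 := by
  rw [← sum_fiberwise_of_maps_to fun a ha => mem_image_of_mem g ha]
  refine sum_eq_zero fun b hb => ?_
  obtain ⟨a₀, ha₀, rfl⟩ := mem_image.1 hb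
  have hfiber : ∀ a ∈ s.filter (g · = g a₀), c a • v a = c a • v a₀ := fun a ha => by
    rw [mem_filter] at ha
    rw [hv a ha.1 a₀ ha₀ ha.2]
  rw [sum_congr rfl hfiber, ← sum_smul, hc, zero_smul]

end Finset

section ordFun

variable {V : Type*} {r : ℕ}

theorem ne_zero_of_lt_ordFun {m : (V × (Fin r → ℕ)) →₀ ℕ} {d : WithBot ℕ} (h : d < ordFun m) :
    m ≠ 0 := by
  rintro rfl
  exact not_lt_bot h

theorem ordFun_eq_sup (m : (V × (Fin r → ℕ)) →₀ ℕ) :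
    ordFun m = m.support.sup fun p => (degS p.2 : WithBot ℕ) := by
  classical
  rw [ordFun, Finset.max_eq_sup_coe, Finset.sup_image]
  rfl

theorem le_ordFun {m : (V × (Fin r → ℕ)) →₀ ℕ} {p : V × (Fin r → ℕ)} (hp : p ∈ m.support) :
    (degS p.2 : WithBot ℕ) ≤ ordFun m := by
  rw [ordFun_eq_sup]
  exact Finset.le_sup (f := fun p => (degS p.2 : WithBot ℕ)) hp

theorem exists_mem_support_degS_eq_ordFun {m : (V × (Fin r → ℕ)) →₀ ℕ} (hm : m ≠ 0) :
    ∃ p ∈ m.support, (degS p.2 : WithBot ℕ) = ordFun m := by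
  obtain ⟨p, hp, h⟩ := Finset.exists_mem_eq_sup m.support (Finsupp.support_nonempty_iff.2 hm)
    fun p => (degS p.2 : WithBot ℕ)
  exact ⟨p, hp, by rw [ordFun_eq_sup, h]⟩

theorem ordFun_add (a b : (V × (Fin r → ℕ)) →₀ ℕ) : ordFun (a + b) = ordFun a ⊔ ordFun b := by
  classical
  simp only [ordFun_eq_sup, Finsupp.support_add_eq_union, Finset.sup_union]

theorem ordFun_mono {a b : (V × (Fin r → ℕ)) →₀ ℕ} (h : a ≤ b) : ordFun a ≤ ordFun b := by
  simp only [ordFun_eq_sup]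
  exact Finset.sup_mono (Finsupp.support_mono h)

theorem ordFun_single (p : V × (Fin r → ℕ)) {k : ℕ} (hk : k ≠ 0) :
    ordFun (Finsupp.single p k) = degS p.2 := by
  rw [ordFun_eq_sup, Finsupp.support_single _ hk, Finset.sup_singleton]

end ordFun

section phiBar

variable {K : Type*} [CommSemiring K] {V : Type*} {r : ℕ}

def xPart (m : (Option V × (Fin r → ℕ)) →₀ ℕ) : (Option V × (Fin r → ℕ)) →₀ ℕ :=
  m.filter fun p => p.1 ≠ none

def tPart (m : (Option V × (Fin r → ℕ)) →₀ ℕ) : (Option V × (Fin r → ℕ)) →₀ ℕ :=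
  m.filter fun p => p.1 = none

theorem tPart_add_xPart (m : (Option V × (Fin r → ℕ)) →₀ ℕ) : tPart m + xPart m = m :=
  Finsupp.filter_add_filter_not m _

theorem eq_none_of_mem_support_tPart {m : (Option V × (Fin r → ℕ)) →₀ ℕ}
    {p : Option V × (Fin r → ℕ)} (hp : p ∈ (tPart m).support) : p.1 = none :=
  (Finset.mem_filter.1 hp).2

theorem phiBar_monomial (m : (Option V × (Fin r → ℕ)) →₀ ℕ) (c : K) :
    phiBar K (monomial m c) = monomial (xPart m) c := by
  rw [phiBar, aeval_monomial, monomial_eq, ← algebraMap_eq,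
    ← Finsupp.prod_filter_mul_prod_filter_not (fun p => p.1 = none)]
  have ht : ∀ p ∈ (tPart m).support, (p.1.elim 1 fun x => X (some x, p.2) :
      MvPolynomial (Option V × (Fin r → ℕ)) K) ^ tPart m p = 1 := fun p hp => by
    rw [eq_none_of_mem_support_tPart hp, Option.elim_none, one_pow]
  have hx : ∀ p ∈ (xPart m).support, (p.1.elim 1 fun x => X (some x, p.2) :
      MvPolynomial (Option V × (Fin r → ℕ)) K) ^ xPart m p = X p ^ xPart m p := fun p hp => by
    obtain ⟨x, hx⟩ := Option.ne_none_iff_exists'.1 (Finset.mem_filter.1 hp).2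
    rw [hx, Option.elim_some, ← hx]
  change _ * ((tPart m).prod _ * (xPart m).prod _) = _
  rw [Finsupp.prod, Finset.prod_eq_one ht, one_mul, Finsupp.prod, Finset.prod_congr rfl hx]
  rfl

open scoped Classical in
theorem coeff_phiBar (f : MvPolynomial (Option V × (Fin r → ℕ)) K)
    (u : (Option V × (Fin r → ℕ)) →₀ ℕ) :
    coeff u (phiBar K f) = ∑ m ∈ f.support with xPart m = u, coeff m f := by
  conv_lhs => rw [f.as_sum, map_sum]
  simp only [phiBar_monomial, coeff_sum, coeff_monomial, Finset.sum_filter]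

end phiBar

section relations

variable (K : Type*) [CommRing K] (V : Type*) (r : ℕ)

def dehomGenerators : Set (MvPolynomial (Option V × (Fin r → ℕ)) K) :=
  {p | ∃ σ τ : Fin r → ℕ, σ ≠ τ ∧ degS σ = degS τ ∧
        p = X ((none : Option V), σ) - X (none, τ)} ∪
   {p | ∃ σ τ : Fin r → ℕ, degS τ ≤ degS σ ∧
        p = X ((none : Option V), σ) * X (none, τ)
          - X (none, σ)} ∪
   {p | ∃ (x : V) (σ τ : Fin r → ℕ), degS τ ≤ degS σ ∧
        p = X ((some x : Option V), σ) * X (none, τ)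
          - X (some x, σ)}

variable {K V r}

local notation "π" => Ideal.Quotient.mk (Ideal.span (dehomGenerators K V r))

theorem mk_X_mul_X_none (v : Option V) {σ τ : Fin r → ℕ} (h : degS τ ≤ degS σ) :
    π (X (v, σ) * X (none, τ)) = π (X (v, σ)) := by
  refine Ideal.Quotient.eq.2 (Ideal.subset_span ?_)
  cases v with
  | none => exact Or.inl (Or.inr ⟨σ, τ, h, rfl⟩)
  | some x => exact Or.inr ⟨x, σ, τ, h, rfl⟩

theorem mk_X_none_eq {σ τ : Fin r → ℕ} (h : degS σ = degS τ) :
    π (X ((none : Option V), σ)) = π (X (none, τ)) := by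
  rcases eq_or_ne σ τ with rfl | hne
  · rfl
  · exact Ideal.Quotient.eq.2 (Ideal.subset_span (Or.inl (Or.inl ⟨σ, τ, hne, h, rfl⟩)))

theorem mk_monomial_mul_X_none {w : (Option V × (Fin r → ℕ)) →₀ ℕ} {τ : Fin r → ℕ}
    (h : (degS τ : WithBot ℕ) ≤ ordFun w) :
    π (monomial w 1 * X (none, τ)) = π (monomial w 1) := by
  obtain ⟨⟨v, σ⟩, hp, hdeg⟩ :=
    exists_mem_support_degS_eq_ordFun (ne_zero_of_lt_ordFun ((WithBot.bot_lt_coe _).trans_le h))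
  have hsplit : w = (w - Finsupp.single (v, σ) 1) + Finsupp.single (v, σ) 1 :=
    (tsub_add_cancel_of_le (Finsupp.single_le_iff.2 (Nat.one_le_iff_ne_zero.2
      (Finsupp.mem_support_iff.1 hp)))).symm
  rw [hsplit, monomial_add_single, pow_one, mul_assoc, map_mul,
    mk_X_mul_X_none v (by exact_mod_cast hdeg ▸ h), ← map_mul]

theorem mk_monomial_add_of_forall_eq_none {w s : (Option V × (Fin r → ℕ)) →₀ ℕ}
    (hs : ∀ p ∈ s.support, p.1 = none) (h : ordFun s ≤ ordFun w) :
    π (monomial (w + s) 1) = π (monomial w 1) := by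
  have hsplit : monomial (w + s) (1 : K) = monomial w 1 * ∏ p ∈ s.support, X p ^ s p := by
    rw [prod_X_pow_eq_monomial, monomial_mul, one_mul]
  rw [hsplit, map_mul, map_prod]
  refine Finset.prod_induction _ (fun y => π (monomial w 1) * y = π (monomial w 1))
    (fun a b ha hb => by rw [← mul_assoc, ha, hb]) (mul_one _) fun p hp => ?_
  obtain ⟨v, σ⟩ := p
  obtain rfl : v = none := hs _ hp
  rw [map_pow]
  induction s (none, σ) with
  | zero => rw [pow_zero, mul_one]
  | succ k ih => rw [pow_succ, ← mul_assoc, ih, ← map_mul,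
      mk_monomial_mul_X_none ((le_ordFun hp).trans h)]

theorem ordFun_tPart_le (m : (Option V × (Fin r → ℕ)) →₀ ℕ) : ordFun (tPart m) ≤ ordFun m :=
  ordFun_mono (le_self_add.trans_eq (tPart_add_xPart m))

theorem mk_monomial_of_ordFun_le_xPart {m : (Option V × (Fin r → ℕ)) →₀ ℕ}
    (h : ordFun m ≤ ordFun (xPart m)) : π (monomial m 1) = π (monomial (xPart m) 1) := by
  conv_lhs => rw [← tPart_add_xPart m, add_comm]
  exact mk_monomial_add_of_forall_eq_none (fun p => eq_none_of_mem_support_tPart)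
    ((ordFun_tPart_le m).trans h)

theorem mk_monomial_of_ordFun_xPart_lt {m : (Option V × (Fin r → ℕ)) →₀ ℕ} {τ : Fin r → ℕ}
    (h : ordFun (xPart m) < ordFun m) (hτ : (degS τ : WithBot ℕ) = ordFun m) :
    π (monomial m 1) = π (monomial (xPart m) 1) * π (X (none, τ)) := by
  have htop : ordFun (tPart m) = ordFun m := by
    have hm : ordFun m = ordFun (tPart m) ⊔ ordFun (xPart m) := by
      rw [← ordFun_add, tPart_add_xPart]
    rw [hm] at h ⊢
    exact (sup_eq_left.2 (lt_sup_iff.1 h |>.resolve_right (lt_irrefl _)).le).symm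
  obtain ⟨⟨v, σ⟩, hp, hdeg⟩ :=
    exists_mem_support_degS_eq_ordFun (ne_zero_of_lt_ordFun (htop ▸ h))
  obtain rfl : v = none := eq_none_of_mem_support_tPart hp
  set s := tPart m - Finsupp.single (none, σ) 1
  have hsplit : m = (xPart m + Finsupp.single (none, σ) 1) + s := by
    rw [add_assoc, add_tsub_cancel_of_le (Finsupp.single_le_iff.2 (Nat.one_le_iff_ne_zero.2
      (Finsupp.mem_support_iff.1 hp))), add_comm, tPart_add_xPart]
  have hs : ordFun s ≤ ordFun (xPart m + Finsupp.single (none, σ) 1) := by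
    rw [ordFun_add, ordFun_single _ one_ne_zero, hdeg]
    exact le_sup_of_le_right (ordFun_mono tsub_le_self)
  conv_lhs => rw [hsplit]
  rw [mk_monomial_add_of_forall_eq_none (fun q hq => eq_none_of_mem_support_tPart
    (Finsupp.support_mono tsub_le_self hq)) hs, monomial_add_single, pow_one, map_mul,
    mk_X_none_eq (by exact_mod_cast hdeg.trans (htop.trans hτ.symm))]

theorem mk_monomial_eq_of_xPart_eq {m m' : (Option V × (Fin r → ℕ)) →₀ ℕ}
    (hx : xPart m = xPart m') (hord : ordFun m = ordFun m') :
    π (monomial m 1) = π (monomial m' 1) := by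
  rcases le_or_gt (ordFun m) (ordFun (xPart m)) with hle | hlt
  · rw [mk_monomial_of_ordFun_le_xPart hle,
      mk_monomial_of_ordFun_le_xPart (m := m') (by rwa [← hx, ← hord]), hx]
  · obtain ⟨p, -, hdeg⟩ := exists_mem_support_degS_eq_ordFun (ne_zero_of_lt_ordFun hlt)
    rw [mk_monomial_of_ordFun_xPart_lt hlt hdeg,
      mk_monomial_of_ordFun_xPart_lt (m := m') (by rwa [← hx, ← hord]) (hdeg.trans hord), hx]

theorem mem_span_dehomGenerators {f : MvPolynomial (Option V × (Fin r → ℕ)) K}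
    (hf : IsOrdHomog f) (hφ : phiBar K f = 0) : f ∈ Ideal.span (dehomGenerators K V r) := by
  classical
  have hterm : ∀ m, Ideal.Quotient.mkₐ K (Ideal.span (dehomGenerators K V r))
      (monomial m (coeff m f)) = coeff m f • π (monomial m 1) := fun m => by
    rw [← mul_one (coeff m f), ← smul_eq_mul, ← smul_monomial, map_smul,
      Ideal.Quotient.mkₐ_eq_mk, smul_eq_mul, mul_one]
  rw [← Ideal.Quotient.eq_zero_iff_mem, ← Ideal.Quotient.mkₐ_eq_mk K, f.as_sum, map_sum,
    Finset.sum_congr rfl fun m _ => hterm m]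
  refine Finset.sum_smul_eq_zero_of_sum_fiberwise_eq_zero
    (fun m hm m' hm' hx => mk_monomial_eq_of_xPart_eq hx (hf m hm m' hm')) fun u => ?_
  rw [← coeff_phiBar, hφ, coeff_zero]

theorem isOrdHomog_monomial_sub_monomial {a b : (Option V × (Fin r → ℕ)) →₀ ℕ}
    (h : ordFun a = ordFun b) (c : K) : IsOrdHomog (monomial a c - monomial b c) := by
  classical
  have hsupp : (monomial a c - monomial b c).support ⊆ {a, b} :=
    (support_sub _ _ _).trans (Finset.union_subset
      (support_monomial_subset.trans (by simp)) (support_monomial_subset.trans (by simp)))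
  intro u hu w hw
  rcases Finset.mem_insert.1 (hsupp hu) with rfl | hu' <;>
    rcases Finset.mem_insert.1 (hsupp hw) with rfl | hw' <;>
    simp_all

theorem X_mul_X_none_sub_X_mem {v : Option V} {σ τ : Fin r → ℕ} (h : degS τ ≤ degS σ) :
    X (v, σ) * X (none, τ) - X (v, σ) ∈
      {f : MvPolynomial (Option V × (Fin r → ℕ)) K | IsOrdHomog f ∧ phiBar K f = 0} := by
  refine ⟨?_, by simp [phiBar]⟩
  rw [X, X, monomial_mul, one_mul]
  refine isOrdHomog_monomial_sub_monomial ?_ 1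
  rw [ordFun_add, ordFun_single _ one_ne_zero, ordFun_single _ one_ne_zero]
  exact sup_eq_left.2 (by exact_mod_cast h)

theorem dehomGenerators_subset :
    dehomGenerators K V r ⊆ {f | IsOrdHomog f ∧ phiBar K f = 0} := by
  rintro p ((⟨σ, τ, -, hdeg, rfl⟩ | ⟨σ, τ, hdeg, rfl⟩) | ⟨x, σ, τ, hdeg, rfl⟩)
  · refine ⟨isOrdHomog_monomial_sub_monomial ?_ 1, by simp [phiBar]⟩
    rw [ordFun_single _ one_ne_zero, ordFun_single _ one_ne_zero, hdeg]
  · exact X_mul_X_none_sub_X_mem hdeg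
  · exact X_mul_X_none_sub_X_mem hdeg

end relations

/-- The ideal `N ⊆ P̄`, the largest `ord`-graded Σ-ideal contained
in `ker φ`, is generated by: (i) `t(σ) − t(τ)` for `σ ≠ τ` with `deg σ = deg τ`;
(ii) `t(σ)t(τ) − t(σ)` and `x(σ)t(τ) − x(σ)` for `deg σ ≥ deg τ`. -/
theorem statement_16 {K : Type*} [Field K] {X : Type*} {r : ℕ} :
    Nideal K X r = Ideal.span
      ({p | ∃ σ τ : Fin r → ℕ, σ ≠ τ ∧ degS σ = degS τ ∧
            p = MvPolynomial.X ((none : Option X), σ) - MvPolynomial.X (none, τ)} ∪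
       {p | ∃ σ τ : Fin r → ℕ, degS τ ≤ degS σ ∧
            p = MvPolynomial.X ((none : Option X), σ) * MvPolynomial.X (none, τ)
              - MvPolynomial.X (none, σ)} ∪
       {p | ∃ (x : X) (σ τ : Fin r → ℕ), degS τ ≤ degS σ ∧
            p = MvPolynomial.X ((some x : Option X), σ) * MvPolynomial.X (none, τ)
              - MvPolynomial.X (some x, σ)}) :=
  le_antisymm (Ideal.span_le.2 fun _ hf => mem_span_dehomGenerators hf.1 hf.2)
    (Ideal.span_le.2 fun _ hp => Ideal.subset_span (dehomGenerators_subset hp))
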